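/- arXiv:1111.4392 — 4 statements merged into one kernel-verified Lean document; each statement's English description precedes it below -/
import Mathlib

section
/- Let T be a k-semigraph and Δ = T ⊔ Δ_μ with the partial multiplication described below. Then Δ is a semimultiplicative set, i.e. for all a,b,c ∈ Δ the product (ab)c is defined if and only if a(bc) is defined, and they are equal whenever defined. -/
/-- A semimultiplicative set: a partially defined associative multiplication,
encoded via `Option`: `mul s t = some u` means "`st` is defined and equals `u`". -/
structure SemimultSet (T : Type*) where
  mul : T → T → Option T
  assoc : ∀ s t u : T,
    (mul s t).bind (fun x => mul x u) = (mul t u).bind (fun y => mul s y)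

/-- A `k`-semigraph: a semimultiplicative set with a degree map `d : T → ℕ^k`
satisfying the unique factorisation property. -/
structure Semigraph (k : Type*) (T : Type*) extends SemimultSet T where
  d : T → k → ℕ
  deg_mul : ∀ x y z : T, mul x y = some z → d z = d x + d y
  factor : ∀ (x : T) (n₁ n₂ : k → ℕ), d x = n₁ + n₂ →
    ∃! p : T × T, mul p.1 p.2 = some x ∧ d p.1 = n₁ ∧ d p.2 = n₂

namespace Semigraph

variable {k T : Type*}

/-- `s ≤ t` iff there is `α` with `αs` defined and `αs = t`. -/
def le (S : Semigraph k T) (s t : T) : Prop := ∃ α : T, S.mul α s = some t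

/-- The set `Δ_μ` of tuples `yμ_{α₁,…,αₙ}` (`n ≥ 1`) with `y ≤ αᵢ` for some `i`. -/
def DeltaMu (S : Semigraph k T) : Type _ :=
  { p : T × List T // p.2 ≠ [] ∧ ∃ α ∈ p.2, S.le p.1 α }

/-- `Δ = T ⊔ Δ_μ`. -/
def Delta (S : Semigraph k T) : Type _ := T ⊕ S.DeltaMu

open scoped Classical in
/-- The partial multiplication on `Δ`: products within `T` as in `T`, and
`x · (yμ_α) = (xy)μ_α` whenever `xy` is defined and `(xy)μ_α ∈ Δ_μ`;
all other products are undefined. -/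
noncomputable def deltaMul (S : Semigraph k T) : S.Delta → S.Delta → Option S.Delta
  | Sum.inl x, Sum.inl y => (S.mul x y).map Sum.inl
  | Sum.inl x, Sum.inr ⟨(y, l), hp⟩ =>
      match S.mul x y with
      | some z =>
          if h : ∃ α ∈ l, S.le z α then some (Sum.inr ⟨(z, l), ⟨hp.1, h⟩⟩)
          else none
      | none => none
  | Sum.inr _, _ => none

/-- The minimal common extension set `T^min(x,y)`. -/
def Tmin (S : Semigraph k T) (x y : T) : Set (T × T) :=
  { p | ∃ z : T, S.mul x p.1 = some z ∧ S.mul y p.2 = some z ∧ S.d z = S.d x ⊔ S.d y }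

end Semigraph

/-- The canonical basis vector `δ_t` of `ℓ²(G)`. -/
noncomputable def deltaVec {G : Type*} (t : G) : lp (fun _ : G => ℂ) 2 :=
  haveI := Classical.decEq G
  lp.single 2 t 1

/-- `la` is the family of left translation operators associated to the partial
multiplication `m`: `la s δ_t = δ_{st}` if `st` is defined, and `0` otherwise. -/
def IsLambdaFam {G : Type*} (m : G → G → Option G)
    (la : G → (lp (fun _ : G => ℂ) 2 →L[ℂ] lp (fun _ : G => ℂ) 2)) : Prop :=
  ∀ s t : G, la s (deltaVec t) = (m s t).elim 0 deltaVec

/-! Every element `c` of `Δ` has a base point in `T` (`y` for `c = y` or `c = yμ_α`), and a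
left factor `x ∈ T` acts on `c` through the product `xy` in `T` followed by rebuilding `c`
around `xy`. Both sides are undefined once `a` or `b` lies in `Δ_μ`; otherwise associativity
reduces to associativity in `T`, plus the observation that the side condition defining `Δ_μ`
passes from `a(by)` to `by`, because `≤` is transitive. -/

namespace Semigraph

variable {k T : Type*} (S : Semigraph k T)

theorem le_trans {u v w : T} (huv : S.le u v) (hvw : S.le v w) : S.le u w := by
  obtain ⟨a, hav⟩ := huv
  obtain ⟨b, hbw⟩ := hvw
  have hassoc := S.assoc b a u
  rw [hav, Option.bind_some, hbw, Option.bind_eq_some_iff] at hassoc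
  obtain ⟨c, -, hcu⟩ := hassoc
  exact ⟨c, hcu⟩

open scoped Classical in
noncomputable def mkMu {l : List T} (hl : l ≠ []) (z : T) : Option S.Delta :=
  if h : ∃ α ∈ l, S.le z α then some (Sum.inr ⟨(z, l), hl, h⟩) else none

def base : S.Delta → T
  | Sum.inl y => y
  | Sum.inr m => m.1.1

noncomputable def rebase : S.Delta → T → Option S.Delta
  | Sum.inl _ => fun v => some (Sum.inl v)
  | Sum.inr ⟨(_, _), hp⟩ => S.mkMu hp.1

theorem deltaMul_inl (x : T) (c : S.Delta) :
    S.deltaMul (Sum.inl x) c = (S.mul x (S.base c)).bind (S.rebase c) := by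
  rcases c with y | ⟨⟨y, l⟩, hp⟩
  · change (S.mul x y).map _ = (S.mul x y).bind _
    cases S.mul x y <;> rfl
  · cases h : S.mul x y <;> simp [deltaMul, base, rebase, mkMu, h]

theorem rebase_bind_deltaMul_inl (a v : T) (c : S.Delta) :
    (S.rebase c v).bind (S.deltaMul (Sum.inl a)) = (S.mul a v).bind (S.rebase c) := by
  rcases c with _ | ⟨⟨_, l⟩, hp⟩
  · exact S.deltaMul_inl a (Sum.inl v)
  by_cases hv : ∃ α ∈ l, S.le v α
  · simp only [rebase, mkMu, dif_pos hv]
    exact S.deltaMul_inl a (Sum.inr ⟨(v, l), hp.1, hv⟩)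
  · simp only [rebase, mkMu, dif_neg hv, Option.bind_none]
    refine (Option.bind_eq_none_iff.2 fun w haw => dif_neg ?_).symm
    rintro ⟨α, hα, hwα⟩
    exact hv ⟨α, hα, S.le_trans ⟨a, haw⟩ hwα⟩

theorem deltaMul_inr_right_bind (a : S.Delta) (m : S.DeltaMu) (c : S.Delta) :
    (S.deltaMul a (Sum.inr m)).bind (fun x => S.deltaMul x c) = none := by
  rcases a with x | _
  · rw [S.deltaMul_inl x (Sum.inr m), Option.bind_assoc, Option.bind_eq_none_iff]
    intro z _
    rcases m with ⟨⟨y, l⟩, hp⟩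
    simp only [rebase, mkMu]
    split_ifs <;> rfl
  · rfl

theorem deltaMul_assoc_inl_inl (a b : T) (c : S.Delta) :
    (S.deltaMul (Sum.inl a) (Sum.inl b)).bind (fun x => S.deltaMul x c) =
      (S.deltaMul (Sum.inl b) c).bind (S.deltaMul (Sum.inl a)) := calc
  _ = ((S.mul a b).bind fun z => S.mul z (S.base c)).bind (S.rebase c) := by
    rw [S.deltaMul_inl a (Sum.inl b), Option.bind_assoc, Option.bind_assoc]
    exact Option.bind_congr fun z _ => S.deltaMul_inl z c
  _ = ((S.mul b (S.base c)).bind fun v => S.mul a v).bind (S.rebase c) := by rw [S.assoc]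
  _ = ((S.mul b (S.base c)).bind (S.rebase c)).bind (S.deltaMul (Sum.inl a)) := by
    simp only [Option.bind_assoc, rebase_bind_deltaMul_inl]
  _ = _ := by rw [deltaMul_inl]

end Semigraph

/-- `Δ = T ⊔ Δ_μ` with the described partial multiplication is a
semimultiplicative set, i.e. the multiplication is associative in the partial
sense: `(ab)c` is defined iff `a(bc)` is defined, and then they agree. -/
theorem delta_semimultiplicative {k T : Type*} (S : Semigraph k T) :
    ∀ a b c : S.Delta,
      (S.deltaMul a b).bind (fun x => S.deltaMul x c) =
        (S.deltaMul b c).bind (fun y => S.deltaMul a y) := by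
  rintro (a | m) (b | n) c
  · exact S.deltaMul_assoc_inl_inl a b c
  · exact S.deltaMul_inr_right_bind (.inl a) n c
  all_goals exact (Option.bind_fun_none _).symm
end

section
/- Let G be a semimultiplicative set with left cancellation and λ_s (s ∈ G) the associated operators on ℓ²(G). Then each λ_s is a partial isometry, i.e. λ_s λ_s* λ_s = λ_s; moreover λ_s*λ_s is the orthogonal projection onto the closed linear span of {δ_t : t ∈ G, st is defined} and λ_sλ_s* is the orthogonal projection onto the closed linear span of {δ_{st} : t ∈ G, st is defined}. -/
/-!
`λ_s` sends `δ_t` to `δ_{st}` or to `0`, and left cancellation makes `t ↦ st` injective, so `λ_s*`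
sends `δ_{st}` back to `δ_t` and kills the basis vectors outside the image. Hence
`λ_s λ_s* λ_s = λ_s` on the basis, and in any star semigroup this identity makes `λ_s*λ_s` and
`λ_sλ_s*` self-adjoint idempotents. The range of an idempotent is closed, and since the `δ_t`
span a dense subspace, the ranges are determined by where the two projections send the `δ_t`.
-/

open scoped lp InnerProductSpace

theorem isStarProjection_star_mul_self_of_mul_star_mul_eq {R : Type*} [Semigroup R] [StarMul R]
    {a : R} (h : a * star a * a = a) : IsStarProjection (star a * a) where
  isIdempotentElem := by rw [IsIdempotentElem, mul_assoc, ← mul_assoc a, h]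
  isSelfAdjoint := .star_mul_self a

theorem isStarProjection_mul_star_self_of_mul_star_mul_eq {R : Type*} [Semigroup R] [StarMul R]
    {a : R} (h : a * star a * a = a) : IsStarProjection (a * star a) where
  isIdempotentElem := by rw [IsIdempotentElem, ← mul_assoc, h]
  isSelfAdjoint := .mul_star_self a

theorem ContinuousLinearMap.IsIdempotentElem.range_eq_topologicalClosure_span {R M : Type*}
    [Ring R] [TopologicalSpace M] [AddCommGroup M] [Module R M] [IsTopologicalAddGroup M]
    [ContinuousConstSMul R M] [T1Space M] {p : M →L[R] M} (hp : IsIdempotentElem p)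
    {D S : Set M} (hD : (Submodule.span R D).topologicalClosure = ⊤)
    (hS : ∀ v ∈ S, p v = v) (hpD : ∀ d ∈ D, p d ∈ Submodule.span R S) :
    LinearMap.range (p : M →ₗ[R] M) = (Submodule.span R S).topologicalClosure := by
  apply le_antisymm
  · have hcomap : (Submodule.span R D).topologicalClosure ≤
        (Submodule.span R S).topologicalClosure.comap (p : M →ₗ[R] M) :=
      Submodule.topologicalClosure_minimal _
        (Submodule.span_le.2 fun d hd => (Submodule.span R S).le_topologicalClosure (hpD d hd))
        ((Submodule.span R S).isClosed_topologicalClosure.preimage p.continuous)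
    rintro _ ⟨x, rfl⟩
    exact hcomap (hD ▸ Submodule.mem_top)
  · exact Submodule.topologicalClosure_minimal _
      (Submodule.span_le.2 fun v hv => ⟨v, hS v hv⟩) (isClosed_range hp)

namespace HilbertBasis

variable {ι 𝕜 E : Type*} [RCLike 𝕜] [NormedAddCommGroup E] [InnerProductSpace 𝕜 E]

theorem ext_inner (b : HilbertBasis ι 𝕜 E) {x y : E} (h : ∀ i, ⟪b i, x⟫_𝕜 = ⟪b i, y⟫_𝕜) :
    x = y :=
  b.repr.injective <| lp.ext <| funext fun i => by simpa only [b.repr_apply_apply] using h i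

theorem ext_continuousLinearMap (b : HilbertBasis ι 𝕜 E) {F : Type*} [TopologicalSpace F]
    [AddCommMonoid F] [Module 𝕜 F] [T2Space F] {S T : E →L[𝕜] F} (h : ∀ i, S (b i) = T (b i)) :
    S = T :=
  ContinuousLinearMap.ext_on (Submodule.dense_iff_topologicalClosure_eq_top.2 b.dense_span)
    (by rintro _ ⟨i, rfl⟩; exact h i)

variable (b : HilbertBasis ι 𝕜 E) {f : ι → Option ι} {T : E →L[𝕜] E}

theorem inner_apply_eq_ite [DecidableEq ι] (hT : ∀ i, T (b i) = (f i).elim 0 b) (i j : ι) :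
    ⟪T (b i), b j⟫_𝕜 = if f i = some j then 1 else 0 := by
  rw [hT]
  cases f i with
  | none => simp
  | some k => simp [orthonormal_iff_ite.1 b.orthonormal]

variable [CompleteSpace E]

theorem adjoint_apply_of_eq_some (hf : ∀ i₁ i₂ j, f i₁ = some j → f i₂ = some j → i₁ = i₂)
    (hT : ∀ i, T (b i) = (f i).elim 0 b) {i j : ι} (h : f i = some j) :
    T.adjoint (b j) = b i := by
  classical
  refine b.ext_inner fun k => ?_
  have hk : f k = some j ↔ k = i := ⟨fun hk => hf k i j hk h, fun hk => hk ▸ h⟩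
  rw [ContinuousLinearMap.adjoint_inner_right, b.inner_apply_eq_ite hT,
    orthonormal_iff_ite.1 b.orthonormal]
  simp only [hk]

theorem adjoint_apply_of_forall_ne (hT : ∀ i, T (b i) = (f i).elim 0 b) {j : ι}
    (h : ∀ i, f i ≠ some j) : T.adjoint (b j) = 0 := by
  classical
  exact b.ext_inner fun k => by
    rw [ContinuousLinearMap.adjoint_inner_right, b.inner_apply_eq_ite hT, inner_zero_right,
      if_neg (h k)]

theorem mul_adjoint_mul_self (hf : ∀ i₁ i₂ j, f i₁ = some j → f i₂ = some j → i₁ = i₂)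
    (hT : ∀ i, T (b i) = (f i).elim 0 b) : T * T.adjoint * T = T :=
  b.ext_continuousLinearMap fun i => by
    cases h : f i with
    | none => simp [hT, h]
    | some j => simp [hT, h, b.adjoint_apply_of_eq_some hf hT h]

theorem isStarProjection_adjoint_mul_self
    (hf : ∀ i₁ i₂ j, f i₁ = some j → f i₂ = some j → i₁ = i₂)
    (hT : ∀ i, T (b i) = (f i).elim 0 b) : IsStarProjection (T.adjoint * T) := by
  simpa only [ContinuousLinearMap.star_eq_adjoint] using
    isStarProjection_star_mul_self_of_mul_star_mul_eq (b.mul_adjoint_mul_self hf hT)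

theorem isStarProjection_mul_adjoint_self
    (hf : ∀ i₁ i₂ j, f i₁ = some j → f i₂ = some j → i₁ = i₂)
    (hT : ∀ i, T (b i) = (f i).elim 0 b) : IsStarProjection (T * T.adjoint) := by
  simpa only [ContinuousLinearMap.star_eq_adjoint] using
    isStarProjection_mul_star_self_of_mul_star_mul_eq (b.mul_adjoint_mul_self hf hT)

theorem range_adjoint_mul_self (hf : ∀ i₁ i₂ j, f i₁ = some j → f i₂ = some j → i₁ = i₂)
    (hT : ∀ i, T (b i) = (f i).elim 0 b) :
    LinearMap.range ((T.adjoint * T : E →L[𝕜] E) : E →ₗ[𝕜] E) =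
      (Submodule.span 𝕜 {v | ∃ i j, f i = some j ∧ v = b i}).topologicalClosure := by
  have hfix : ∀ {i j}, f i = some j → (T.adjoint * T) (b i) = b i := fun h => by
    simp [hT, h, b.adjoint_apply_of_eq_some hf hT h]
  refine ContinuousLinearMap.IsIdempotentElem.range_eq_topologicalClosure_span
    (b.isStarProjection_adjoint_mul_self hf hT).isIdempotentElem
    b.dense_span (by rintro _ ⟨i, j, h, rfl⟩; exact hfix h) ?_
  rintro _ ⟨i, rfl⟩
  cases h : f i with
  | none => simp [hT, h]
  | some j => rw [hfix h]; exact Submodule.subset_span ⟨i, j, h, rfl⟩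

theorem range_mul_adjoint_self (hf : ∀ i₁ i₂ j, f i₁ = some j → f i₂ = some j → i₁ = i₂)
    (hT : ∀ i, T (b i) = (f i).elim 0 b) :
    LinearMap.range ((T * T.adjoint : E →L[𝕜] E) : E →ₗ[𝕜] E) =
      (Submodule.span 𝕜 {v | ∃ i j, f i = some j ∧ v = b j}).topologicalClosure := by
  have hfix : ∀ {i j}, f i = some j → (T * T.adjoint) (b j) = b j := fun h => by
    simp [hT, h, b.adjoint_apply_of_eq_some hf hT h]
  refine ContinuousLinearMap.IsIdempotentElem.range_eq_topologicalClosure_span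
    (b.isStarProjection_mul_adjoint_self hf hT).isIdempotentElem
    b.dense_span (by rintro _ ⟨i, j, h, rfl⟩; exact hfix h) ?_
  rintro _ ⟨j, rfl⟩
  by_cases hj : ∃ i, f i = some j
  · obtain ⟨i, h⟩ := hj
    rw [hfix h]
    exact Submodule.subset_span ⟨i, j, h, rfl⟩
  · simp [b.adjoint_apply_of_forall_ne hT fun i h => hj ⟨i, h⟩]

end HilbertBasis

noncomputable def deltaHilbertBasis (G : Type*) : HilbertBasis G ℂ ℓ²(G, ℂ) :=
  HilbertBasis.ofRepr (LinearIsometryEquiv.refl ℂ _)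

theorem coe_deltaHilbertBasis (G : Type*) : ⇑(deltaHilbertBasis G) = deltaVec := rfl

/-- each `λ_s` is a partial isometry; `λ_s*λ_s` is the orthogonal
projection (self-adjoint idempotent with the stated range) onto the closed span
of the `δ_t` with `st` defined, and `λ_sλ_s*` is the orthogonal projection onto
the closed span of the corresponding `δ_(st)`. -/
theorem lambda_partialIsometry {G : Type*} (S : SemimultSet G)
    (hcancel : ∀ s t₁ t₂ u : G, S.mul s t₁ = some u → S.mul s t₂ = some u → t₁ = t₂)
    (la : G → (lp (fun _ : G => ℂ) 2 →L[ℂ] lp (fun _ : G => ℂ) 2))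
    (hla : IsLambdaFam S.mul la) (s : G) :
    la s * ContinuousLinearMap.adjoint (la s) * la s = la s ∧
    (IsSelfAdjoint (ContinuousLinearMap.adjoint (la s) * la s) ∧
      IsIdempotentElem (ContinuousLinearMap.adjoint (la s) * la s) ∧
      LinearMap.range (((ContinuousLinearMap.adjoint (la s) * la s : lp (fun _ : G => ℂ) 2 →L[ℂ] lp (fun _ : G => ℂ) 2)) : lp (fun _ : G => ℂ) 2 →ₗ[ℂ] lp (fun _ : G => ℂ) 2) =
        (Submodule.span ℂ
          {v : lp (fun _ : G => ℂ) 2 | ∃ t u : G, S.mul s t = some u ∧ v = deltaVec t}).topologicalClosure) ∧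
    (IsSelfAdjoint (la s * ContinuousLinearMap.adjoint (la s)) ∧
      IsIdempotentElem (la s * ContinuousLinearMap.adjoint (la s)) ∧
      LinearMap.range (((la s * ContinuousLinearMap.adjoint (la s) : lp (fun _ : G => ℂ) 2 →L[ℂ] lp (fun _ : G => ℂ) 2)) : lp (fun _ : G => ℂ) 2 →ₗ[ℂ] lp (fun _ : G => ℂ) 2) =
        (Submodule.span ℂ
          {v : lp (fun _ : G => ℂ) 2 | ∃ t u : G, S.mul s t = some u ∧ v = deltaVec u}).topologicalClosure) := by
  set b := deltaHilbertBasis G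
  have hT : ∀ t, la s (b t) = (S.mul s t).elim 0 b := by
    simpa only [b, coe_deltaHilbertBasis] using hla s
  have hP := b.isStarProjection_adjoint_mul_self (hcancel s) hT
  have hQ := b.isStarProjection_mul_adjoint_self (hcancel s) hT
  refine ⟨b.mul_adjoint_mul_self (hcancel s) hT, ⟨hP.isSelfAdjoint, hP.isIdempotentElem, ?_⟩,
    ⟨hQ.isSelfAdjoint, hQ.isIdempotentElem, ?_⟩⟩
  · simpa only [b, coe_deltaHilbertBasis] using b.range_adjoint_mul_self (hcancel s) hT
  · simpa only [b, coe_deltaHilbertBasis] using b.range_mul_adjoint_self (hcancel s) hT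
end

section
/- Let G be a semimultiplicative set with left cancellation and λ_s (s ∈ G) the associated operators on ℓ²(G). For all s,t ∈ G, the four orthogonal projections λ_s*λ_s, λ_t*λ_t, λ_sλ_s* and λ_tλ_t* pairwise commute. -/
/-! With left cancellation, `λ_s*` sends `δ_{st}` to `δ_t` and kills every `δ_u` with `u ∉ sG`.
Hence `λ_s*λ_s` and `λ_sλ_s*` are diagonal in the basis `(δ_t)`: they are the projections onto
the closed spans of `{δ_t : st defined}` and `{δ_{st} : st defined}`. Operators that are diagonal
in a common basis commute. -/

open ContinuousLinearMap

section

open scoped Classical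

variable {G : Type*}

local notation "ℓ²(" G ")" => lp (fun _ : G => ℂ) 2

theorem deltaVec_apply (t u : G) : deltaVec t u = if u = t then 1 else 0 := by
  simp [deltaVec, Pi.single_apply]

theorem inner_deltaVec_left (t : G) (f : ℓ²(G)) : inner ℂ (deltaVec t) f = f t := by
  simp [deltaVec, lp.inner_single_left]

theorem smul_deltaVec (t : G) (c : ℂ) : c • deltaVec t = lp.single 2 t c := by
  simpa [deltaVec] using (lp.single_smul (E := fun _ : G => ℂ) 2 t c 1).symm

theorem ext_deltaVec {A B : ℓ²(G) →L[ℂ] ℓ²(G)} (h : ∀ t, A (deltaVec t) = B (deltaVec t)) :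
    A = B :=
  lp.ext_continuousLinearMap ENNReal.ofNat_ne_top fun t => ContinuousLinearMap.ext fun c => by
    simp [← smul_deltaVec, h]

theorem adjoint_apply_deltaVec_apply (A : ℓ²(G) →L[ℂ] ℓ²(G)) (u t : G) :
    adjoint A (deltaVec u) t = starRingEnd ℂ (A (deltaVec t) u) := by
  rw [← inner_deltaVec_left, adjoint_inner_right, ← inner_conj_symm, inner_deltaVec_left]

def IsDiagonal (A : ℓ²(G) →L[ℂ] ℓ²(G)) : Prop :=
  ∀ t, ∃ c : ℂ, A (deltaVec t) = c • deltaVec t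

theorem IsDiagonal.commute {A B : ℓ²(G) →L[ℂ] ℓ²(G)} (hA : IsDiagonal A) (hB : IsDiagonal B) :
    Commute A B := by
  refine ext_deltaVec fun t => ?_
  obtain ⟨a, ha⟩ := hA t
  obtain ⟨b, hb⟩ := hB t
  change A (B _) = B (A _)
  rw [ha, hb, map_smul, map_smul, ha, hb, smul_comm]

namespace IsLambdaFam

variable {m : G → G → Option G} {la : G → ℓ²(G) →L[ℂ] ℓ²(G)}

theorem apply_deltaVec_apply (hla : IsLambdaFam m la) (s t u : G) :
    la s (deltaVec t) u = if m s t = some u then 1 else 0 := by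
  rw [hla s t]
  cases m s t <;> simp [deltaVec_apply, eq_comm]

theorem adjoint_apply_deltaVec_apply (hla : IsLambdaFam m la) (s u t : G) :
    adjoint (la s) (deltaVec u) t = if m s t = some u then 1 else 0 := by
  rw [_root_.adjoint_apply_deltaVec_apply, hla.apply_deltaVec_apply]
  split_ifs <;> simp

theorem adjoint_apply_deltaVec_of_mul_eq (hla : IsLambdaFam m la)
    (hcancel : ∀ s t₁ t₂ u : G, m s t₁ = some u → m s t₂ = some u → t₁ = t₂)
    {s t u : G} (h : m s t = some u) : adjoint (la s) (deltaVec u) = deltaVec t :=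
  lp.ext <| funext fun t' => by
    rw [hla.adjoint_apply_deltaVec_apply, deltaVec_apply]
    exact if_congr ⟨fun h' => hcancel s t' t u h' h, fun ht => ht ▸ h⟩ rfl rfl

theorem adjoint_apply_deltaVec_of_forall_ne (hla : IsLambdaFam m la) {s u : G}
    (h : ∀ t, m s t ≠ some u) : adjoint (la s) (deltaVec u) = 0 :=
  lp.ext <| funext fun t => by
    rw [hla.adjoint_apply_deltaVec_apply, if_neg (h t)]
    rfl

theorem isDiagonal_adjoint_mul_self (hla : IsLambdaFam m la)
    (hcancel : ∀ s t₁ t₂ u : G, m s t₁ = some u → m s t₂ = some u → t₁ = t₂) (s : G) :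
    IsDiagonal (adjoint (la s) * la s) := by
  intro t
  simp only [mul_apply_eq_comp]
  cases h : m s t with
  | none => exact ⟨0, by simp [hla s t, h]⟩
  | some u => exact ⟨1, by simp [hla s t, h, hla.adjoint_apply_deltaVec_of_mul_eq hcancel h]⟩

theorem isDiagonal_mul_adjoint_self (hla : IsLambdaFam m la)
    (hcancel : ∀ s t₁ t₂ u : G, m s t₁ = some u → m s t₂ = some u → t₁ = t₂) (s : G) :
    IsDiagonal (la s * adjoint (la s)) := by
  intro u
  simp only [mul_apply_eq_comp]
  by_cases hu : ∃ t, m s t = some u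
  · obtain ⟨t, h⟩ := hu
    exact ⟨1, by simp [hla.adjoint_apply_deltaVec_of_mul_eq hcancel h, hla s t, h]⟩
  · exact ⟨0, by simp [hla.adjoint_apply_deltaVec_of_forall_ne (not_exists.mp hu)]⟩

end IsLambdaFam

end

/-- the projections `λ_s*λ_s`, `λ_t*λ_t`, `λ_sλ_s*`, `λ_tλ_t*`
pairwise commute. -/
theorem lambda_projections_commute {G : Type*} (S : SemimultSet G)
    (hcancel : ∀ s t₁ t₂ u : G, S.mul s t₁ = some u → S.mul s t₂ = some u → t₁ = t₂)
    (la : G → (lp (fun _ : G => ℂ) 2 →L[ℂ] lp (fun _ : G => ℂ) 2))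
    (hla : IsLambdaFam S.mul la) (s t : G) :
    Commute (ContinuousLinearMap.adjoint (la s) * la s)
      (ContinuousLinearMap.adjoint (la t) * la t) ∧
    Commute (ContinuousLinearMap.adjoint (la s) * la s)
      (la s * ContinuousLinearMap.adjoint (la s)) ∧
    Commute (ContinuousLinearMap.adjoint (la s) * la s)
      (la t * ContinuousLinearMap.adjoint (la t)) ∧
    Commute (ContinuousLinearMap.adjoint (la t) * la t)
      (la s * ContinuousLinearMap.adjoint (la s)) ∧
    Commute (ContinuousLinearMap.adjoint (la t) * la t)
      (la t * ContinuousLinearMap.adjoint (la t)) ∧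
    Commute (la s * ContinuousLinearMap.adjoint (la s))
      (la t * ContinuousLinearMap.adjoint (la t)) := by
  have hD := hla.isDiagonal_adjoint_mul_self hcancel
  have hR := hla.isDiagonal_mul_adjoint_self hcancel
  exact ⟨(hD s).commute (hD t), (hD s).commute (hR s), (hD s).commute (hR t),
    (hD t).commute (hR s), (hD t).commute (hR t), (hR s).commute (hR t)⟩
end

section
/- Let T be a k-semigraph in which every element of T^(0) is idempotent, and let Δ = T ⊔ Δ_μ be the associated left-cancellative semimultiplicative set with operators λ_a (a ∈ Δ) on ℓ²(Δ). Then the map T → B(ℓ²(Δ)), t ↦ λ_t, is injective, and λ_t ≠ 0 for every t ∈ T. -/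
/-!
If degree-zero elements are idempotent, the factorisation `t = t₁ e` with `d e = 0` gives
`t e = t₁ (e e) = t`, so `λ_t δ_e = δ_t` and `λ_t ≠ 0`. If moreover `λ_t = λ_{t'}`, then
`t' e = t`, and uniqueness of factorisations of `t` with degrees `(d t, 0)` forces `t' = t`.
-/

lemma deltaVec_ne_zero {G : Type*} (t : G) : deltaVec t ≠ 0 := by
  classical
  intro h
  have h_eval := congrArg (fun v : lp (fun _ : G => ℂ) 2 => (v : ∀ _ : G, ℂ) t) h
  simp only [deltaVec, lp.single_apply_self] at h_eval
  exact one_ne_zero h_eval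

lemma deltaVec_injective {G : Type*} : Function.Injective (deltaVec : G → _) := by
  classical
  intro a b h
  by_contra hne
  have h_eval := congrArg (fun v : lp (fun _ : G => ℂ) 2 => (v : ∀ _ : G, ℂ) a) h
  simp only [deltaVec, lp.single_apply_self, lp.single_apply_ne _ _ _ hne] at h_eval
  exact one_ne_zero h_eval

lemma IsLambdaFam.apply_deltaVec_eq_deltaVec_iff {G : Type*} {m : G → G → Option G}
    {la : G → (lp (fun _ : G => ℂ) 2 →L[ℂ] lp (fun _ : G => ℂ) 2)} (hla : IsLambdaFam m la)
    (s t u : G) : la s (deltaVec t) = deltaVec u ↔ m s t = some u := by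
  rw [hla]
  rcases m s t with _ | v
  · simpa using (deltaVec_ne_zero u).symm
  · simpa using deltaVec_injective.eq_iff

namespace Semigraph

variable {k T : Type*} (S : Semigraph k T)

lemma exists_right_identity_of_idempotent (hidem : ∀ e : T, S.d e = 0 → S.mul e e = some e)
    (t : T) : ∃ e : T, S.mul t e = some t := by
  obtain ⟨⟨t₁, e⟩, ⟨ht, -, he⟩, -⟩ := S.factor t (S.d t) 0 (add_zero _).symm
  refine ⟨e, ?_⟩
  have h_assoc := S.assoc t₁ e e
  rw [ht, hidem e he] at h_assoc
  simpa [ht] using h_assoc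

lemma eq_of_mul_eq_of_mul_eq {a b a' b' x : T} (h : S.mul a b = some x)
    (h' : S.mul a' b' = some x) (hd : S.d b = S.d b') : a = a' ∧ b = b' := by
  have hda : S.d a = S.d a' := by
    have hx := S.deg_mul a b x h
    rw [S.deg_mul a' b' x h', hd] at hx
    exact (add_right_cancel hx).symm
  obtain ⟨p, -, huniq⟩ := S.factor x (S.d a) (S.d b) (S.deg_mul a b x h)
  have hp : (a, b) = (a', b') :=
    (huniq (a, b) ⟨h, rfl, rfl⟩).trans (huniq (a', b') ⟨h', hda.symm, hd.symm⟩).symm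
  exact Prod.mk.inj hp

lemma deltaMul_inl_inl_eq_some_inl_iff (x y z : T) :
    S.deltaMul (Sum.inl x) (Sum.inl y) = some (Sum.inl z) ↔ S.mul x y = some z := by
  show (S.mul x y).map Sum.inl = _ ↔ _
  rw [Option.map_eq_some_iff]
  simp

end Semigraph

/-- the map `t ↦ λ_t` (`t ∈ T`) is injective and nowhere zero. -/
theorem lambda_injective_nonzero {k T : Type*} (S : Semigraph k T)
    (hidem : ∀ e : T, S.d e = 0 → S.mul e e = some e)
    (la : S.Delta → (lp (fun _ : S.Delta => ℂ) 2 →L[ℂ] lp (fun _ : S.Delta => ℂ) 2))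
    (hla : IsLambdaFam S.deltaMul la) :
    Function.Injective (fun t : T => la (Sum.inl t)) ∧
    ∀ t : T, la (Sum.inl t) ≠ 0 := by
  have h_lambda : ∀ s t e : T, la (Sum.inl s) (deltaVec (Sum.inl e : S.Delta)) =
      deltaVec (Sum.inl t : S.Delta) ↔ S.mul s e = some t := fun s t e =>
    (hla.apply_deltaVec_eq_deltaVec_iff _ _ _).trans (S.deltaMul_inl_inl_eq_some_inl_iff s e t)
  refine ⟨fun t t' h => ?_, fun t h => ?_⟩
  · obtain ⟨e, hte⟩ := S.exists_right_identity_of_idempotent hidem t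
    have ht'e : S.mul t' e = some t := by
      rw [← h_lambda]
      simpa only [h] using (h_lambda t t e).2 hte
    exact (S.eq_of_mul_eq_of_mul_eq hte ht'e rfl).1
  · obtain ⟨e, hte⟩ := S.exists_right_identity_of_idempotent hidem t
    have h_src := (h_lambda t t e).2 hte
    rw [h, zero_apply] at h_src
    exact deltaVec_ne_zero _ h_src.symm
end
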